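/- arXiv:2009.05380 — 4 statements merged into one kernel-verified Lean document; each statement's English description precedes it below -/
import Mathlib

section
/- (Proposition 3.1, estimate (15): observation from age zero under a vanishing final condition.) Let A, T > 0, 0 < a₂ ≤ A and ϱ > 0. Let μ : [0,A) → [0,∞) be measurable and locally integrable, let φ : ℝ → ℝ be measurable with φ(s) = 0 for a.e. s ∈ (T−ϱ, T), and define n(a,t) = exp(∫₀^a μ(r) dr)·φ(t−a) for (a,t) ∈ (0,A)×(0,T), so that n(0,t) = φ(t). Then there exists a constant C > 0 depending only on ϱ and a₂ (independent of μ, φ and T) such that ∫₀^T φ(t)² dt ≤ C·∫₀^T ∫₀^{a₂} n(a,t)² da dt. -/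
open MeasureTheory Set ENNReal

/-- Proposition 3.1, estimate (15): for `0 < a₂` and `ϱ > 0`, there is a constant
`C > 0` depending only on `ϱ` and `a₂` such that for all `A ≥ a₂`, all `T > 0`, every
measurable locally integrable `μ : [0,A) → [0,∞)` and every measurable `φ : ℝ → ℝ`
vanishing a.e. on `(T−ϱ, T)`, the solution `n(a,t) = exp(∫₀^a μ)·φ(t−a)` satisfies
`∫₀^T n(0,t)² dt ≤ C·∫₀^T ∫₀^{a₂} n(a,t)² da dt`. -/
theorem stmt2 (a₂ ϱ : ℝ) (ha₂ : 0 < a₂) (hϱ : 0 < ϱ) :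
    ∃ C > 0, ∀ A T : ℝ, 0 < A → a₂ ≤ A → 0 < T →
      ∀ μ φ : ℝ → ℝ, Measurable μ → (∀ a ∈ Ico 0 A, 0 ≤ μ a) →
        (∀ a ∈ Ico 0 A, IntegrableOn μ (Icc 0 a)) → Measurable φ →
        (∀ᵐ s ∂(volume.restrict (Ioo (T - ϱ) T)), φ s = 0) →
        (∫⁻ t in Ioo 0 T, ENNReal.ofReal ((φ t) ^ 2)) ≤
          ENNReal.ofReal C *
            ∫⁻ t in Ioo 0 T, ∫⁻ a in Ioo 0 a₂,
              ENNReal.ofReal ((Real.exp (∫ r in (0:ℝ)..a, μ r) * φ (t - a)) ^ 2) := by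
  set δ := min a₂ ϱ with hδdef
  have hδ : 0 < δ := lt_min ha₂ hϱ
  refine ⟨1 / δ, by positivity, ?_⟩
  intro A T hA ha₂A hT μ φ hμm hμ0 hμint hφm hφ0
  set g : ℝ → ℝ≥0∞ := fun s => ENNReal.ofReal ((φ s) ^ 2) with hg
  have hgm : Measurable g := (hφm.pow_const 2).ennreal_ofReal
  set I : ℝ≥0∞ := ∫⁻ t in Ioo 0 T, g t with hI
  -- Step 1: drop the exponential factor (it is ≥ 1)
  have step1 : (∫⁻ t in Ioo 0 T, ∫⁻ a in Ioo 0 a₂, g (t - a)) ≤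
      ∫⁻ t in Ioo 0 T, ∫⁻ a in Ioo 0 a₂,
        ENNReal.ofReal ((Real.exp (∫ r in (0:ℝ)..a, μ r) * φ (t - a)) ^ 2) := by
    refine lintegral_mono fun t => ?_
    refine lintegral_mono_ae ?_
    filter_upwards [ae_restrict_mem measurableSet_Ioo] with a ha
    have hint : (0:ℝ) ≤ ∫ r in (0:ℝ)..a, μ r := by
      refine intervalIntegral.integral_nonneg ha.1.le fun r hr => ?_
      exact hμ0 r ⟨hr.1, lt_of_le_of_lt hr.2 (lt_of_lt_of_le ha.2 ha₂A)⟩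
    have hexp : (1:ℝ) ≤ Real.exp (∫ r in (0:ℝ)..a, μ r) := by
      simpa using Real.exp_le_exp.2 hint |>.trans_eq rfl
    refine ENNReal.ofReal_le_ofReal ?_
    have he2 : (1:ℝ) ≤ (Real.exp (∫ r in (0:ℝ)..a, μ r)) ^ 2 := by nlinarith
    have h1 : (φ (t - a)) ^ 2 ≤ (Real.exp (∫ r in (0:ℝ)..a, μ r)) ^ 2 * (φ (t - a)) ^ 2 := by
      have := mul_le_mul_of_nonneg_right he2 (sq_nonneg (φ (t - a)))
      linarith
    calc (φ (t - a)) ^ 2 ≤ _ := h1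
      _ = (Real.exp (∫ r in (0:ℝ)..a, μ r) * φ (t - a)) ^ 2 := by ring
  -- Step 2: swap the order of integration (Tonelli)
  have hswap : (∫⁻ t in Ioo 0 T, ∫⁻ a in Ioo 0 a₂, g (t - a)) =
      ∫⁻ a in Ioo 0 a₂, ∫⁻ t in Ioo 0 T, g (t - a) := by
    refine lintegral_lintegral_swap ?_
    exact (hgm.comp (measurable_fst.sub measurable_snd)).aemeasurable
  -- Step 3: for each `a ∈ (0, δ)`, the inner integral dominates `I`
  have step3 : ∀ a ∈ Ioo (0:ℝ) δ, I ≤ ∫⁻ t in Ioo 0 T, g (t - a) := by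
    intro a ha
    -- translation identity
    have htrans : (∫⁻ t in Ioo a T, g (t - a)) = ∫⁻ s in Ioo 0 (T - a), g s := by
      rw [← lintegral_indicator measurableSet_Ioo,
        ← lintegral_indicator measurableSet_Ioo]
      have : (Ioo a T).indicator (fun t => g (t - a)) =
          fun t => (Ioo 0 (T - a)).indicator g (t + (-a)) := by
        funext t
        by_cases h : t ∈ Ioo a T
        · have hm : t + -a ∈ Ioo 0 (T - a) := ⟨by linarith [h.1], by linarith [h.2]⟩
          rw [indicator_of_mem h, indicator_of_mem hm, sub_eq_add_neg]
        · rw [indicator_of_notMem h, indicator_of_notMem]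
          intro hmem
          exact h ⟨by linarith [hmem.1], by linarith [hmem.2]⟩
      rw [this, lintegral_add_right_eq_self (fun t => (Ioo 0 (T - a)).indicator g t) (-a)]
    -- vanishing on (T-ϱ, T)
    have hzero : (∫⁻ s in Ioo (T - ϱ) T, g s) = 0 := by
      rw [← lintegral_zero]
      refine lintegral_congr_ae ?_
      filter_upwards [hφ0] with s hs
      simp [hg, hs]
    -- split (0,T) ⊆ (0, T-a) ∪ (T-ϱ, T)
    have hsub : Ioo (0:ℝ) T ⊆ Ioo 0 (T - a) ∪ Ioo (T - ϱ) T := by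
      intro t ht
      by_cases h : t < T - a
      · exact Or.inl ⟨ht.1, h⟩
      · refine Or.inr ⟨?_, ht.2⟩
        have : a < ϱ := lt_of_lt_of_le ha.2 (min_le_right _ _)
        linarith [not_lt.1 h]
    calc I ≤ ∫⁻ t in Ioo 0 (T - a) ∪ Ioo (T - ϱ) T, g t := lintegral_mono_set hsub
      _ ≤ (∫⁻ t in Ioo 0 (T - a), g t) + ∫⁻ t in Ioo (T - ϱ) T, g t := by
          rw [← lintegral_add_measure]
          exact lintegral_mono' (Measure.restrict_union_le _ _) le_rfl
      _ = ∫⁻ t in Ioo 0 (T - a), g t := by rw [hzero, add_zero]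
      _ = ∫⁻ t in Ioo a T, g (t - a) := htrans.symm
      _ ≤ ∫⁻ t in Ioo 0 T, g (t - a) :=
          lintegral_mono_set (Ioo_subset_Ioo ha.1.le le_rfl)
  -- Step 4: integrate over a ∈ (0, δ)
  have step4 : ENNReal.ofReal δ * I ≤ ∫⁻ a in Ioo 0 a₂, ∫⁻ t in Ioo 0 T, g (t - a) := by
    have h1 : ENNReal.ofReal δ * I = ∫⁻ _ in Ioo (0:ℝ) δ, I := by
      rw [setLIntegral_const, Real.volume_Ioo, sub_zero, mul_comm]
    rw [h1]
    calc (∫⁻ _ in Ioo (0:ℝ) δ, I) ≤ ∫⁻ a in Ioo 0 δ, ∫⁻ t in Ioo 0 T, g (t - a) := by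
          refine lintegral_mono_ae ?_
          filter_upwards [ae_restrict_mem measurableSet_Ioo] with a ha
          exact step3 a ha
      _ ≤ ∫⁻ a in Ioo 0 a₂, ∫⁻ t in Ioo 0 T, g (t - a) :=
          lintegral_mono_set (Ioo_subset_Ioo le_rfl (min_le_left _ _))
  -- Conclude
  have key : ENNReal.ofReal δ * I ≤
      ∫⁻ t in Ioo 0 T, ∫⁻ a in Ioo 0 a₂,
        ENNReal.ofReal ((Real.exp (∫ r in (0:ℝ)..a, μ r) * φ (t - a)) ^ 2) := by
    calc ENNReal.ofReal δ * I ≤ _ := step4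
      _ = _ := hswap.symm
      _ ≤ _ := step1
  have hδne : (ENNReal.ofReal (1 / δ)) * ENNReal.ofReal δ = 1 := by
    rw [← ENNReal.ofReal_mul (by positivity)]
    rw [one_div, inv_mul_cancel₀ (ne_of_gt hδ)]
    simp
  calc I = (ENNReal.ofReal (1 / δ) * ENNReal.ofReal δ) * I := by rw [hδne, one_mul]
    _ = ENNReal.ofReal (1 / δ) * (ENNReal.ofReal δ * I) := by ring
    _ ≤ _ := mul_le_mul_right key _
end

section
/- (Proposition 3.1, estimate (16) of the nonlocal term l(0,·).) Let A, T > 0, 0 ≤ b₁ < b₂ ≤ A, b ∈ (0,A] with b₁ < b, set ν = min{b, b₂}, and let b₁ < η < T. Let μ_f : [0,A) → [0,∞) be measurable and locally integrable, let ψ : ℝ → ℝ be measurable, and let l be a measurable function on (0,A)×(0,T) such that l(a,t) = exp(∫₀^a μ_f(r) dr)·ψ(t−a) for a.e. (a,t) ∈ (0,ν)×(0,T). Then there exists a constant C > 0 depending only on b₁, b₂, b and η (independent of μ_f, ψ, l and T) such that ∫₀^{T−η} ψ(t)² dt ≤ C·∫₀^T ∫_{b₁}^{b₂} l(a,t)²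 da dt. -/
open MeasureTheory Set

/-- Proposition 3.1, estimate (16): for `0 ≤ b₁ < b₂`, `b > 0` with `b₁ < b`,
`ν = min{b, b₂}` and `b₁ < η`, there is a constant `C > 0` depending only on
`b₁, b₂, b, η` such that for all `A` with `b₂ ≤ A`, `b ≤ A`, all `T > η`, every
measurable locally integrable `μ_f : [0,A) → [0,∞)`, every measurable `ψ : ℝ → ℝ` and
every measurable `l` on `(0,A)×(0,T)` equal a.e. on `(0,ν)×(0,T)` to
`exp(∫₀^a μ_f)·ψ(t−a)`, one has
`∫₀^{T−η} ψ(t)² dt ≤ C·∫₀^T ∫_{b₁}^{b₂} l(a,t)² da dt`. -/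
theorem stmt3 (b₁ b₂ b η : ℝ) (hb₁ : 0 ≤ b₁) (hb : b₁ < b₂) (hbpos : 0 < b)
    (hb₁b : b₁ < b) (hη : b₁ < η) :
    ∃ C > 0, ∀ A T : ℝ, 0 < A → b₂ ≤ A → b ≤ A → 0 < T → η < T →
      ∀ (μf ψ : ℝ → ℝ) (l : ℝ → ℝ → ℝ),
        Measurable μf → (∀ a ∈ Ico 0 A, 0 ≤ μf a) →
        (∀ a ∈ Ico 0 A, IntegrableOn μf (Icc 0 a)) → Measurable ψ →
        Measurable (fun p : ℝ × ℝ => l p.1 p.2) →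
        (∀ᵐ p ∂(volume.restrict (Ioo 0 (min b b₂) ×ˢ Ioo 0 T)),
          l p.1 p.2 = Real.exp (∫ r in (0:ℝ)..p.1, μf r) * ψ (p.2 - p.1)) →
        (∫⁻ t in Ioo 0 (T - η), ENNReal.ofReal ((ψ t) ^ 2)) ≤
          ENNReal.ofReal C *
            ∫⁻ t in Ioo 0 T, ∫⁻ a in Ioo b₁ b₂, ENNReal.ofReal ((l a t) ^ 2) := by
  set m : ℝ := min (min b b₂) η with hm_def
  have hb₁m : b₁ < m := lt_min (lt_min hb₁b hb) hη
  have hmν : m ≤ min b b₂ := min_le_left _ _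
  have hmη : m ≤ η := min_le_right _ _
  have hmb₂ : m ≤ b₂ := hmν.trans (min_le_right _ _)
  refine ⟨(m - b₁)⁻¹, inv_pos.2 (by linarith), ?_⟩
  intro A T hA hb₂A hbA hT hηT μf ψ l hμf hμf0 hμfint hψ hl hae
  -- turn the product a.e. statement into an iterated one
  have hae' : ∀ᵐ a ∂(volume.restrict (Ioo 0 (min b b₂))),
      ∀ᵐ t ∂(volume.restrict (Ioo 0 T)),
        l a t = Real.exp (∫ r in (0:ℝ)..a, μf r) * ψ (t - a) := by
    have h := hae
    rw [Measure.volume_eq_prod, ← Measure.prod_restrict] at h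
    exact Measure.ae_ae_of_ae_prod h
  have hsub : Ioo b₁ m ⊆ Ioo 0 (min b b₂) := fun x hx =>
    ⟨lt_of_le_of_lt hb₁ hx.1, lt_of_lt_of_le hx.2 hmν⟩
  have hae'' : ∀ᵐ a ∂(volume.restrict (Ioo b₁ m)),
      ∀ᵐ t ∂(volume.restrict (Ioo 0 T)),
        l a t = Real.exp (∫ r in (0:ℝ)..a, μf r) * ψ (t - a) :=
    ae_restrict_of_ae_restrict_of_subset hsub hae'
  -- the key pointwise (in `a`) estimate
  have key : ∀ᵐ a ∂(volume.restrict (Ioo b₁ m)),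
      (∫⁻ s in Ioo 0 (T - η), ENNReal.ofReal ((ψ s) ^ 2)) ≤
        ∫⁻ t in Ioo 0 T, ENNReal.ofReal ((l a t) ^ 2) := by
    filter_upwards [hae'', ae_restrict_mem measurableSet_Ioo] with a ha haI
    have ha0 : 0 ≤ a := hb₁.trans haI.1.le
    have haη : a ≤ η := haI.2.le.trans hmη
    have hexp : (1:ℝ) ≤ Real.exp (∫ r in (0:ℝ)..a, μf r) := by
      apply Real.one_le_exp
      apply intervalIntegral.integral_nonneg ha0
      intro u hu
      exact hμf0 u ⟨hu.1, lt_of_le_of_lt hu.2 (lt_of_lt_of_le haI.2 (hmb₂.trans hb₂A))⟩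
    calc (∫⁻ s in Ioo 0 (T - η), ENNReal.ofReal ((ψ s) ^ 2))
        ≤ ∫⁻ s in Ioo (0 - a) (T - a), ENNReal.ofReal ((ψ s) ^ 2) := by
          apply lintegral_mono_set
          intro s hs
          exact ⟨lt_of_le_of_lt (by linarith) hs.1, lt_of_lt_of_le hs.2 (by linarith)⟩
      _ = ∫⁻ t in Ioo 0 T, ENNReal.ofReal ((ψ (t - a)) ^ 2) := by
          have hmp : MeasurePreserving (fun x : ℝ => x - a) volume volume :=
            measurePreserving_sub_right volume a
          have hemb : MeasurableEmbedding (fun x : ℝ => x - a) :=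
            (MeasurableEquiv.subRight a).measurableEmbedding
          have := hmp.setLIntegral_comp_preimage_emb hemb
            (fun s => ENNReal.ofReal ((ψ s) ^ 2)) (Ioo (0 - a) (T - a))
          rw [← this, Set.preimage_sub_const_Ioo]
          norm_num
      _ ≤ ∫⁻ t in Ioo 0 T, ENNReal.ofReal ((l a t) ^ 2) := by
          apply lintegral_mono_ae
          filter_upwards [ha] with t ht
          rw [ht]
          apply ENNReal.ofReal_le_ofReal
          rw [mul_pow]
          exact le_mul_of_one_le_left (sq_nonneg _) (one_le_pow₀ hexp)
  -- integrate in `a` over `Ioo b₁ m`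
  have hswap :
      (∫⁻ a in Ioo b₁ m, ∫⁻ t in Ioo 0 T, ENNReal.ofReal ((l a t) ^ 2)) =
      ∫⁻ t in Ioo 0 T, ∫⁻ a in Ioo b₁ m, ENNReal.ofReal ((l a t) ^ 2) := by
    apply lintegral_lintegral_swap
    exact ((hl.pow_const 2).ennreal_ofReal).aemeasurable
  have step1 : ENNReal.ofReal (m - b₁) *
      (∫⁻ s in Ioo 0 (T - η), ENNReal.ofReal ((ψ s) ^ 2)) ≤
      ∫⁻ t in Ioo 0 T, ∫⁻ a in Ioo b₁ b₂, ENNReal.ofReal ((l a t) ^ 2) := by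
    have h1 : ENNReal.ofReal (m - b₁) *
        (∫⁻ s in Ioo 0 (T - η), ENNReal.ofReal ((ψ s) ^ 2)) =
        ∫⁻ _ in Ioo b₁ m, (∫⁻ s in Ioo 0 (T - η), ENNReal.ofReal ((ψ s) ^ 2)) := by
      rw [lintegral_const, Measure.restrict_apply_univ, Real.volume_Ioo, mul_comm]
    rw [h1]
    calc (∫⁻ _ in Ioo b₁ m, (∫⁻ s in Ioo 0 (T - η), ENNReal.ofReal ((ψ s) ^ 2)))
        ≤ ∫⁻ a in Ioo b₁ m, ∫⁻ t in Ioo 0 T, ENNReal.ofReal ((l a t) ^ 2) :=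
          lintegral_mono_ae key
      _ = ∫⁻ t in Ioo 0 T, ∫⁻ a in Ioo b₁ m, ENNReal.ofReal ((l a t) ^ 2) := hswap
      _ ≤ ∫⁻ t in Ioo 0 T, ∫⁻ a in Ioo b₁ b₂, ENNReal.ofReal ((l a t) ^ 2) := by
          apply lintegral_mono
          intro t
          apply lintegral_mono_set
          exact Ioo_subset_Ioo le_rfl hmb₂
  have hc0 : ENNReal.ofReal (m - b₁) ≠ 0 := by
    simp [ENNReal.ofReal_eq_zero]; linarith
  have hct : ENNReal.ofReal (m - b₁) ≠ ⊤ := ENNReal.ofReal_ne_top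
  calc (∫⁻ t in Ioo 0 (T - η), ENNReal.ofReal ((ψ t) ^ 2))
      = (ENNReal.ofReal (m - b₁))⁻¹ * (ENNReal.ofReal (m - b₁) *
          (∫⁻ t in Ioo 0 (T - η), ENNReal.ofReal ((ψ t) ^ 2))) := by
        rw [← mul_assoc, ENNReal.inv_mul_cancel hc0 hct, one_mul]
    _ ≤ (ENNReal.ofReal (m - b₁))⁻¹ *
          (∫⁻ t in Ioo 0 T, ∫⁻ a in Ioo b₁ b₂, ENNReal.ofReal ((l a t) ^ 2)) :=
        mul_le_mul_right step1 _
    _ = ENNReal.ofReal (m - b₁)⁻¹ *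
          (∫⁻ t in Ioo 0 T, ∫⁻ a in Ioo b₁ b₂, ENNReal.ofReal ((l a t) ^ 2)) := by
        rw [ENNReal.ofReal_inv_of_pos (by linarith)]
end

section
/- (Proposition 3.2: observability of the initial datum of n.) Let A > 0, 0 ≤ a₁ < a₂ ≤ A and T > max{a₁, A−a₂}. Let μ : [0,A) → [0,∞) be measurable and locally integrable, let φ : ℝ → ℝ be measurable with φ(s) = 0 for a.e. s < T−A, and define n(a,t) = exp(∫₀^a μ(r) dr)·φ(t−a) for (a,t) ∈ (0,A)×[0,T), so that n(a,0) = exp(∫₀^a μ(r) dr)·φ(−a). Then there exists a constant C > 0 depending only on a₁, a₂, A and T (independent of μ and φ) such that ∫₀^A n(a,0)² da ≤ C·∫₀^T ∫_{a₁}^{a₂} n(a,t)² da dt. -/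
/-!
Along the characteristic `t ↦ (a + t, t)` one has
`n(a + t, t) = exp (∫₀^{a+t} μ) φ(-a)`, and since `μ ≥ 0` this dominates `|n(a, 0)|`.
The datum `n(·, 0)` vanishes beyond `A - T`, and for `0 < a ≤ A - T` the characteristic
issued from `(a, 0)` stays in the observation strip `(a₁, a₂)` for a time at least
`δ = min (T - a₁) (min (a₂ - a₁) (T - (A - a₂)))` before `t = T`. Integrating in `a`
and exchanging the integrals (Tonelli, then the shift `a ↦ a + t`) gives the estimate
with `C = 1 / δ`.
-/

open MeasureTheory Set
open scoped ENNReal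

theorem measurable_intervalIntegral_of_measurable {f : ℝ → ℝ} (hf : Measurable f) (c : ℝ) :
    Measurable fun a => ∫ r in c..a, f r := by
  have hsection : ∀ s : Set (ℝ × ℝ), MeasurableSet s →
      Measurable fun a => ∫ r, s.indicator (fun p => f p.2) (a, r) := fun s hs =>
    ((hf.comp measurable_snd).indicator hs).stronglyMeasurable.integral_prod_right'.measurable
  have hIoc (a b : ℝ) : ∫ r in Ioc a b, f r = ∫ r, (Ioc a b).indicator f r :=
    (integral_indicator measurableSet_Ioc).symm
  simp only [intervalIntegral, hIoc]
  exact (hsection {p | p.2 ∈ Ioc c p.1}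
      ((measurableSet_lt measurable_const measurable_snd).inter
        (measurableSet_le measurable_snd measurable_fst))).sub
    (hsection {p | p.2 ∈ Ioc p.1 c}
      ((measurableSet_lt measurable_fst measurable_snd).inter
        (measurableSet_le measurable_snd measurable_const)))

theorem intervalIntegral_mono_upper_of_nonneg {f : ℝ → ℝ} {a b c : ℝ} (hca : c ≤ a)
    (hab : a ≤ b) (hf : ∀ r ∈ Ioc c b, 0 ≤ f r) (hfi : IntegrableOn f (Icc c b)) :
    ∫ r in c..a, f r ≤ ∫ r in c..b, f r :=
  intervalIntegral.integral_mono_interval le_rfl hca hab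
    ((ae_restrict_iff' measurableSet_Ioc).2 (ae_of_all _ hf))
    ((intervalIntegrable_iff_integrableOn_Icc_of_le (hca.trans hab)).2 hfi)

theorem ae_comp_neg_eq_zero_of_ae_restrict_Iio {φ : ℝ → ℝ} {c : ℝ}
    (hφ : ∀ᵐ s ∂(volume.restrict (Iio c)), φ s = 0) : ∀ᵐ a : ℝ, -c < a → φ (-a) = 0 := by
  filter_upwards [(Measure.measurePreserving_neg (volume : Measure ℝ)).quasiMeasurePreserving.ae
    ((ae_restrict_iff' measurableSet_Iio).1 hφ)] with a ha hca
  exact ha (neg_lt.1 hca)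

theorem setLIntegral_le_of_ae_eq_zero {α : Type*} [MeasurableSpace α] {μ : Measure α}
    {f : α → ℝ≥0∞} {s t : Set α} (hs : MeasurableSet s) (ht : MeasurableSet t)
    (hf : ∀ᵐ x ∂μ, x ∈ s → x ∉ t → f x = 0) :
    ∫⁻ x in s, f x ∂μ ≤ ∫⁻ x in t, f x ∂μ := by
  calc ∫⁻ x in s, f x ∂μ = ∫⁻ x in s, t.indicator f x ∂μ := by
        refine setLIntegral_congr_fun_ae hs ?_
        filter_upwards [hf] with x hx hxs
        by_cases hxt : x ∈ t
        · rw [indicator_of_mem hxt]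
        · rw [indicator_of_notMem hxt, hx hxs hxt]
    _ ≤ ∫⁻ x, t.indicator f x ∂μ := setLIntegral_le_lintegral _ _
    _ = ∫⁻ x in t, f x ∂μ := lintegral_indicator ht f

theorem mul_setLIntegral_le_lintegral_of_le_translate {f : ℝ → ℝ≥0∞} {F : ℝ → ℝ → ℝ≥0∞}
    (hF : Measurable (Function.uncurry F)) {I J K : Set ℝ} (hJ : MeasurableSet J)
    (hK : MeasurableSet K) {δ : ℝ≥0∞}
    (hδ : ∀ a ∈ I, δ ≤ volume (J ∩ (fun t => a + t) ⁻¹' K))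
    (hfF : ∀ a ∈ I, ∀ t ∈ J, a + t ∈ K → f a ≤ F t (a + t)) :
    δ * ∫⁻ a in I, f a ≤ ∫⁻ t in J, ∫⁻ a in K, F t a := by
  have hkernel : Measurable (Function.uncurry fun a t => K.indicator (F t) (a + t)) :=
    (hF.comp (measurable_snd.prodMk (measurable_fst.add measurable_snd))).indicator
      (measurable_fst.add measurable_snd hK)
  have hpointwise : ∀ a ∈ I, δ * f a ≤ ∫⁻ t in J, K.indicator (F t) (a + t) := by
    intro a ha
    have hS : MeasurableSet ((fun t => a + t) ⁻¹' K) := measurable_const_add a hK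
    calc δ * f a ≤ volume (J ∩ (fun t => a + t) ⁻¹' K) * f a := mul_le_mul_left (hδ a ha) _
      _ = ∫⁻ t in J, ((fun t => a + t) ⁻¹' K).indicator (fun _ => f a) t := by
        rw [lintegral_indicator_const hS, Measure.restrict_apply hS, inter_comm, mul_comm]
      _ ≤ ∫⁻ t in J, K.indicator (F t) (a + t) := by
        refine setLIntegral_mono' hJ fun t ht => ?_
        by_cases hat : a + t ∈ K
        · rw [indicator_of_mem (show t ∈ (fun t => a + t) ⁻¹' K from hat),
            indicator_of_mem hat]
          exact hfF a ha t ht hat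
        · rw [indicator_of_notMem (show t ∉ (fun t => a + t) ⁻¹' K from hat)]
          exact zero_le
  calc δ * ∫⁻ a in I, f a ≤ ∫⁻ a in I, δ * f a := lintegral_const_mul_le _ _
    _ ≤ ∫⁻ a in I, ∫⁻ t in J, K.indicator (F t) (a + t) :=
      setLIntegral_mono hkernel.lintegral_prod_right hpointwise
    _ ≤ ∫⁻ a, ∫⁻ t in J, K.indicator (F t) (a + t) := setLIntegral_le_lintegral _ _
    _ = ∫⁻ t in J, ∫⁻ a, K.indicator (F t) (a + t) :=
      lintegral_lintegral_swap hkernel.aemeasurable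
    _ = ∫⁻ t in J, ∫⁻ a in K, F t a := by
      refine lintegral_congr fun t => ?_
      rw [lintegral_add_right_eq_self (K.indicator (F t)) t, lintegral_indicator hK]

def observabilityWindow (A T a₁ a₂ : ℝ) : ℝ := min (T - a₁) (min (a₂ - a₁) (T - (A - a₂)))

theorem observabilityWindow_pos {A T a₁ a₂ : ℝ} (ha : a₁ < a₂) (hT : max a₁ (A - a₂) < T) :
    0 < observabilityWindow A T a₁ a₂ := by
  rw [max_lt_iff] at hT
  exact lt_min (by linarith) (lt_min (by linarith) (by linarith))

theorem ofReal_observabilityWindow_le_volume {A T a₁ a₂ a : ℝ} (ha₁ : 0 ≤ a₁)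
    (ha : a ∈ Icc 0 (A - T)) :
    ENNReal.ofReal (observabilityWindow A T a₁ a₂) ≤
      volume (Ioo 0 T ∩ (fun t => a + t) ⁻¹' Ioo a₁ a₂) := by
  rw [preimage_const_add_Ioo, Ioo_inter_Ioo, Real.volume_Ioo]
  refine ENNReal.ofReal_le_ofReal ?_
  have h₁ : observabilityWindow A T a₁ a₂ ≤ T - a₁ := min_le_left _ _
  have h₂ : observabilityWindow A T a₁ a₂ ≤ a₂ - a₁ := (min_le_right _ _).trans (min_le_left _ _)
  have h₃ : observabilityWindow A T a₁ a₂ ≤ T - (A - a₂) :=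
    (min_le_right _ _).trans (min_le_right _ _)
  rw [le_sub_iff_add_le, le_min_iff, add_max, max_le_iff, max_le_iff]
  refine ⟨⟨?_, ?_⟩, ?_, ?_⟩ <;> linarith [ha.1, ha.2]

theorem stmt4_general (A T a₁ a₂ : ℝ) (ha₁ : 0 ≤ a₁) (ha : a₁ < a₂) (ha₂ : a₂ ≤ A)
    (hT : max a₁ (A - a₂) < T) :
    ∃ C > 0, ∀ μ φ : ℝ → ℝ, Measurable μ → (∀ a ∈ Ico 0 A, 0 ≤ μ a) →
      (∀ a ∈ Ico 0 A, IntegrableOn μ (Icc 0 a)) → Measurable φ →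
      (∀ᵐ s ∂(volume.restrict (Iio (T - A))), φ s = 0) →
      (∫⁻ a in Ioo 0 A,
          ENNReal.ofReal ((Real.exp (∫ r in (0:ℝ)..a, μ r) * φ (-a)) ^ 2)) ≤
        ENNReal.ofReal C *
          ∫⁻ t in Ioo 0 T, ∫⁻ a in Ioo a₁ a₂,
            ENNReal.ofReal ((Real.exp (∫ r in (0:ℝ)..a, μ r) * φ (t - a)) ^ 2) := by
  set δ := observabilityWindow A T a₁ a₂
  have hδ : 0 < δ := observabilityWindow_pos ha hT
  refine ⟨δ⁻¹, inv_pos.2 hδ, fun μ φ hμ hμ0 hμint hφ hφ0 => ?_⟩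
  set P : ℝ → ℝ := fun a => ∫ r in (0:ℝ)..a, μ r
  have hP : Measurable P := measurable_intervalIntegral_of_measurable hμ 0
  set n : ℝ → ℝ → ℝ≥0∞ := fun t a => ENNReal.ofReal ((Real.exp (P a) * φ (t - a)) ^ 2)
  have hn : Measurable (Function.uncurry n) := by fun_prop
  have hdatum_vanishes : ∀ᵐ a : ℝ, a ∈ Ioo 0 A → a ∉ Ioc 0 (A - T) →
      ENNReal.ofReal ((Real.exp (P a) * φ (-a)) ^ 2) = 0 := by
    filter_upwards [ae_comp_neg_eq_zero_of_ae_restrict_Iio hφ0] with a hφa haA haAT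
    simp only [mem_Ioc, not_and, not_le] at haAT
    simp [hφa (by linarith [haAT haA.1])]
  have hcharacteristic : ∀ a ∈ Ioc 0 (A - T), ∀ t ∈ Ioo 0 T, a + t ∈ Ioo a₁ a₂ →
      ENNReal.ofReal ((Real.exp (P a) * φ (-a)) ^ 2) ≤ n t (a + t) := by
    intro a ha t ht hat
    have hA : a + t < A := hat.2.trans_le ha₂
    simp only [n, sub_add_cancel_right, mul_pow]
    gcongr
    exact intervalIntegral_mono_upper_of_nonneg ha.1.le (by linarith [ht.1])
      (fun r hr => hμ0 r ⟨hr.1.le, hr.2.trans_lt hA⟩) (hμint _ ⟨by linarith [ha.1, ht.1], hA⟩)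
  calc _ ≤ ∫⁻ a in Ioc 0 (A - T), ENNReal.ofReal ((Real.exp (P a) * φ (-a)) ^ 2) :=
        setLIntegral_le_of_ae_eq_zero measurableSet_Ioo measurableSet_Ioc hdatum_vanishes
    _ = ENNReal.ofReal δ⁻¹ * (ENNReal.ofReal δ *
          ∫⁻ a in Ioc 0 (A - T), ENNReal.ofReal ((Real.exp (P a) * φ (-a)) ^ 2)) := by
        rw [← mul_assoc, ← ENNReal.ofReal_mul (inv_nonneg.2 hδ.le), inv_mul_cancel₀ hδ.ne',
          ENNReal.ofReal_one, one_mul]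
    _ ≤ ENNReal.ofReal δ⁻¹ * ∫⁻ t in Ioo 0 T, ∫⁻ a in Ioo a₁ a₂, n t a := by
        gcongr
        exact mul_setLIntegral_le_lintegral_of_le_translate hn measurableSet_Ioo
          measurableSet_Ioo (fun a ha => ofReal_observabilityWindow_le_volume ha₁
            (Ioc_subset_Icc_self ha)) hcharacteristic

/-- Proposition 3.2: for `0 ≤ a₁ < a₂ ≤ A` and `T > max{a₁, A−a₂}`, there is a constant
`C > 0` depending only on `a₁, a₂, A, T` such that, for every measurable locally
integrable `μ : [0,A) → [0,∞)` and every measurable `φ : ℝ → ℝ` with `φ(s) = 0` for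
a.e. `s < T−A`, the solution `n(a,t) = exp(∫₀^a μ)·φ(t−a)` satisfies
`∫₀^A n(a,0)² da ≤ C·∫₀^T ∫_{a₁}^{a₂} n(a,t)² da dt`. -/
theorem stmt4 (A T a₁ a₂ : ℝ) (hA : 0 < A) (ha₁ : 0 ≤ a₁) (ha : a₁ < a₂) (ha₂ : a₂ ≤ A)
    (hT : max a₁ (A - a₂) < T) :
    ∃ C > 0, ∀ μ φ : ℝ → ℝ, Measurable μ → (∀ a ∈ Ico 0 A, 0 ≤ μ a) →
      (∀ a ∈ Ico 0 A, IntegrableOn μ (Icc 0 a)) → Measurable φ →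
      (∀ᵐ s ∂(volume.restrict (Iio (T - A))), φ s = 0) →
      (∫⁻ a in Ioo 0 A,
          ENNReal.ofReal ((Real.exp (∫ r in (0:ℝ)..a, μ r) * φ (-a)) ^ 2)) ≤
        ENNReal.ofReal C *
          ∫⁻ t in Ioo 0 T, ∫⁻ a in Ioo a₁ a₂,
            ENNReal.ofReal ((Real.exp (∫ r in (0:ℝ)..a, μ r) * φ (t - a)) ^ 2) :=
  stmt4_general A T a₁ a₂ ha₁ ha ha₂ hT
end

section
/- (Proposition 3.3: observability of the initial datum of l on small ages.) Let A, T > 0, 0 ≤ b₁ < b₂ ≤ A, b ∈ (0,A], set ν = min{b, b₂}, and let b₁ < a₀ < ν and T > b₁. Let μ_f : [0,A) → [0,∞) be measurable and locally integrable, let ψ : ℝ → ℝ be measurable, and let l be a measurable function on (0,A)×[0,T) such that l(a,t) = exp(∫₀^a μ_f(r) dr)·ψ(t−a) for a.e. (a,t) ∈ (0,ν)×(0,T), with l(a,0) = exp(∫₀^a μ_f(r) dr)·ψ(−a) for a ∈ (0,ν). Then there exists a constant C > 0 depending only on b₁, b₂, b, a₀ and T (independent of μ_f and ψ) such that ∫₀^{a₀}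 l(a,0)² da ≤ C·∫₀^T ∫_{b₁}^{b₂} l(a,t)² da dt. -/
/-!
Along the characteristic through `(s, 0)` with `0 < s < a₀` the function `l` is
`exp (∫₀^a μ_f) ψ(-s)`, and since `μ_f ≥ 0` this weight only grows with the age `a`;
hence `l(s, 0)²` is dominated by `l²` at every point of the characteristic. Inside the
observation strip `(b₁, ν) × (0, T)` each such characteristic has length at least
`δ = min (ν - a₀) (T - b₁)`, so integrating over `s` (Tonelli, after the shear
`(a, t) ↦ (a, a - t)`) gives `δ ∫₀^{a₀} l(s, 0)² ds ≤ ∬_{(b₁,ν)×(0,T)} l²`.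
-/

open MeasureTheory Set
open scoped ENNReal

theorem monotoneOn_intervalIntegral_of_nonneg {f : ℝ → ℝ} {x₀ A : ℝ}
    (hf₀ : ∀ a ∈ Ico x₀ A, 0 ≤ f a)
    (hfi : ∀ a ∈ Ico x₀ A, IntegrableOn f (Icc x₀ a)) :
    MonotoneOn (fun a => ∫ r in x₀..a, f r) (Ico x₀ A) := by
  intro x hx y hy hxy
  refine intervalIntegral.integral_mono_interval le_rfl hx.1 hxy ?_ ?_
  · filter_upwards [ae_restrict_mem measurableSet_Ioc] with r hr
    exact hf₀ r ⟨hr.1.le, hr.2.trans_lt hy.2⟩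
  · exact (intervalIntegrable_iff_integrableOn_Icc_of_le hy.1).2 (hfi y hy)

theorem lintegral_prod_eq_lintegral_lintegral_sub {G : Type*} [MeasurableSpace G]
    [AddGroup G] [MeasurableAdd₂ G] [MeasurableNeg G] {μ ν : Measure G}
    [SFinite μ] [SFinite ν] [ν.IsAddLeftInvariant] [ν.IsNegInvariant]
    {F : G × G → ℝ≥0∞} (hF : Measurable F) :
    ∫⁻ p, F p ∂μ.prod ν = ∫⁻ s, ∫⁻ a, F (a, a - s) ∂μ ∂ν := by
  rw [lintegral_prod _ hF.aemeasurable]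
  calc ∫⁻ a, ∫⁻ t, F (a, t) ∂ν ∂μ = ∫⁻ a, ∫⁻ s, F (a, a - s) ∂ν ∂μ :=
        lintegral_congr fun a => (lintegral_sub_left_eq_self (fun t => F (a, t)) a).symm
    _ = _ := lintegral_lintegral_swap (hF.comp (by fun_prop)).aemeasurable

section Characteristics

variable {b₁ c a₀ T : ℝ}

theorem ofReal_min_le_volume_characteristic (hb₁ : 0 ≤ b₁) (hb₁a₀ : b₁ ≤ a₀)
    {s : ℝ} (hs : s ∈ Ioo 0 a₀) :
    ENNReal.ofReal (min (c - a₀) (T - b₁)) ≤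
      volume ((fun a => (a, a - s)) ⁻¹' (Ioo b₁ c ×ˢ Ioo 0 T)) := by
  set δ := min (c - a₀) (T - b₁)
  set m := max b₁ s
  have hm₁ : b₁ ≤ m := le_max_left _ _
  have hm₂ : s ≤ m := le_max_right _ _
  have hma₀ : m ≤ a₀ := max_le hb₁a₀ hs.2.le
  have hms : m ≤ b₁ + s := max_le (by linarith [hs.1]) (by linarith)
  have hδc : δ ≤ c - a₀ := min_le_left _ _
  have hδT : δ ≤ T - b₁ := min_le_right _ _
  calc ENNReal.ofReal δ = volume (Ioo m (m + δ)) := by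
        rw [Real.volume_Ioo, add_sub_cancel_left]
    _ ≤ _ := measure_mono fun a ha => by
      refine ⟨⟨?_, ?_⟩, ?_, ?_⟩ <;> linarith [ha.1, ha.2]

theorem ofReal_min_mul_setLIntegral_le_of_le_along_characteristics
    (hb₁ : 0 ≤ b₁) (hb₁a₀ : b₁ ≤ a₀) {h : ℝ → ℝ≥0∞} (hh : Measurable h) {F : ℝ × ℝ → ℝ≥0∞}
    (hhF : ∀ᵐ p ∂volume.restrict (Ioo b₁ c ×ˢ Ioo 0 T),
      p.1 - p.2 ∈ Ioo 0 a₀ → h (p.1 - p.2) ≤ F p) :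
    ENNReal.ofReal (min (c - a₀) (T - b₁)) * ∫⁻ s in Ioo 0 a₀, h s ≤
      ∫⁻ p in Ioo b₁ c ×ˢ Ioo 0 T, F p := by
  set δ := min (c - a₀) (T - b₁)
  set S : Set (ℝ × ℝ) := Ioo b₁ c ×ˢ Ioo 0 T
  have hS : MeasurableSet S := measurableSet_Ioo.prod measurableSet_Ioo
  set K : ℝ × ℝ → ℝ≥0∞ := S.indicator fun p => (Ioo 0 a₀).indicator h (p.1 - p.2)
  have hK : Measurable K :=
    ((hh.indicator measurableSet_Ioo).comp (by fun_prop)).indicator hS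
  have hfiber : ∀ s ∈ Ioo 0 a₀, ENNReal.ofReal δ * h s ≤ ∫⁻ a, K (a, a - s) := by
    intro s hs
    have hKs :
        (fun a => K (a, a - s)) = ((fun a => (a, a - s)) ⁻¹' S).indicator fun _ => h s := by
      ext a
      simp only [K, indicator, sub_sub_cancel, hs, if_true, mem_preimage]
    rw [hKs, lintegral_indicator_const (measurableSet_preimage (by fun_prop) hS), mul_comm]
    gcongr
    exact ofReal_min_le_volume_characteristic hb₁ hb₁a₀ hs
  calc ENNReal.ofReal δ * ∫⁻ s in Ioo 0 a₀, h s
      = ∫⁻ s in Ioo 0 a₀, ENNReal.ofReal δ * h s := (lintegral_const_mul _ hh).symm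
    _ ≤ ∫⁻ s in Ioo 0 a₀, ∫⁻ a, K (a, a - s) :=
        setLIntegral_mono' measurableSet_Ioo hfiber
    _ ≤ ∫⁻ s, ∫⁻ a, K (a, a - s) := setLIntegral_le_lintegral _ _
    _ = ∫⁻ p, K p := by
      rw [Measure.volume_eq_prod, lintegral_prod_eq_lintegral_lintegral_sub hK]
    _ = ∫⁻ p in S, (Ioo 0 a₀).indicator h (p.1 - p.2) := lintegral_indicator hS _
    _ ≤ ∫⁻ p in S, F p := by
      refine lintegral_mono_ae ?_
      filter_upwards [hhF] with p hp
      by_cases hmem : p.1 - p.2 ∈ Ioo 0 a₀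
      · rw [indicator_of_mem hmem]
        exact hp hmem
      · rw [indicator_of_notMem hmem]
        exact zero_le

end Characteristics

theorem stmt6_general (b₁ b₂ b a₀ T : ℝ) (hb₁ : 0 ≤ b₁)
    (ha₀ : b₁ < a₀) (ha₀ν : a₀ < min b b₂) (hTb₁ : b₁ < T) :
    ∃ C > 0, ∀ (A : ℝ), 0 < A → b₂ ≤ A → b ≤ A →
      ∀ (μf ψ : ℝ → ℝ) (l : ℝ → ℝ → ℝ),
        Measurable μf → (∀ a ∈ Ico 0 A, 0 ≤ μf a) →
        (∀ a ∈ Ico 0 A, IntegrableOn μf (Icc 0 a)) → Measurable ψ →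
        Measurable (fun p : ℝ × ℝ => l p.1 p.2) →
        (∀ᵐ p ∂(volume.restrict (Ioo 0 (min b b₂) ×ˢ Ioo 0 T)),
          l p.1 p.2 = Real.exp (∫ r in (0:ℝ)..p.1, μf r) * ψ (p.2 - p.1)) →
        (∀ a ∈ Ioo 0 (min b b₂),
          l a 0 = Real.exp (∫ r in (0:ℝ)..a, μf r) * ψ (-a)) →
        (∫⁻ a in Ioo 0 a₀, ENNReal.ofReal ((l a 0) ^ 2)) ≤
          ENNReal.ofReal C *
            ∫⁻ t in Ioo 0 T, ∫⁻ a in Ioo b₁ b₂, ENNReal.ofReal ((l a t) ^ 2) := by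
  set ν := min b b₂
  have hδ : 0 < min (ν - a₀) (T - b₁) := lt_min (by linarith) (by linarith)
  refine ⟨(min (ν - a₀) (T - b₁))⁻¹, inv_pos.2 hδ, ?_⟩
  intro A _ hb₂A _ μf ψ l _ hμf₀ hμfi _ hl hae hinit
  have hνA : ν ≤ A := (min_le_right _ _).trans hb₂A
  have hweight := monotoneOn_intervalIntegral_of_nonneg hμf₀ hμfi
  have hl₂ : Measurable fun p : ℝ × ℝ => ENNReal.ofReal (l p.1 p.2 ^ 2) :=
    (hl.pow_const 2).ennreal_ofReal
  have hdom : ∀ᵐ p ∂volume.restrict (Ioo b₁ ν ×ˢ Ioo 0 T), p.1 - p.2 ∈ Ioo 0 a₀ →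
      ENNReal.ofReal (l (p.1 - p.2) 0 ^ 2) ≤ ENNReal.ofReal (l p.1 p.2 ^ 2) := by
    filter_upwards [ae_restrict_of_ae_restrict_of_subset
        (prod_mono (Ioo_subset_Ioo_left hb₁) subset_rfl) hae,
      ae_restrict_mem (measurableSet_Ioo.prod measurableSet_Ioo)]
      with p hp ⟨⟨ha, haν⟩, ht, _⟩ hs
    rw [hp, hinit _ ⟨hs.1, by linarith [hs.2]⟩, neg_sub, mul_pow, mul_pow]
    gcongr
    exact hweight ⟨hs.1.le, by linarith⟩ ⟨by linarith, by linarith⟩ (by linarith)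
  have hobs := ofReal_min_mul_setLIntegral_le_of_le_along_characteristics
    hb₁ ha₀.le (hl₂.comp (measurable_id.prodMk measurable_const)) hdom
  have hstrip : ∫⁻ p in Ioo b₁ ν ×ˢ Ioo 0 T, ENNReal.ofReal (l p.1 p.2 ^ 2) ≤
      ∫⁻ t in Ioo 0 T, ∫⁻ a in Ioo b₁ b₂, ENNReal.ofReal (l a t ^ 2) :=
    calc _ ≤ ∫⁻ p in Ioo b₁ b₂ ×ˢ Ioo 0 T, ENNReal.ofReal (l p.1 p.2 ^ 2) :=
          lintegral_mono_set (prod_mono (Ioo_subset_Ioo_right (min_le_right _ _)) subset_rfl)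
      _ = _ := by rw [Measure.volume_eq_prod, setLIntegral_prod_symm _ hl₂.aemeasurable]
  rw [ENNReal.ofReal_inv_of_pos hδ, ← ENNReal.div_eq_inv_mul, ENNReal.le_div_iff_mul_le
    (Or.inl (ENNReal.ofReal_pos.2 hδ).ne') (Or.inl ENNReal.ofReal_ne_top), mul_comm]
  exact hobs.trans hstrip

/-- Proposition 3.3: for `0 ≤ b₁ < b₂`, `b ∈ (0,A]`, `ν = min{b,b₂}`, `b₁ < a₀ < ν`
and `T > b₁`, there is a constant `C > 0` depending only on `b₁, b₂, b, a₀, T` such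
that for every `A` (with `b₂ ≤ A`, `b ≤ A`), every measurable locally integrable
`μ_f : [0,A) → [0,∞)`, every measurable `ψ : ℝ → ℝ` and every measurable `l` on
`(0,A)×[0,T)` equal a.e. on `(0,ν)×(0,T)` to `exp(∫₀^a μ_f)·ψ(t−a)`, and equal to
`exp(∫₀^a μ_f)·ψ(−a)` at `t = 0` for `a ∈ (0,ν)`, one has
`∫₀^{a₀} l(a,0)² da ≤ C·∫₀^T ∫_{b₁}^{b₂} l(a,t)² da dt`. -/
theorem stmt6 (b₁ b₂ b a₀ T : ℝ) (hT : 0 < T) (hb₁ : 0 ≤ b₁) (hb : b₁ < b₂)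
    (hbpos : 0 < b) (ha₀ : b₁ < a₀) (ha₀ν : a₀ < min b b₂) (hTb₁ : b₁ < T) :
    ∃ C > 0, ∀ (A : ℝ), 0 < A → b₂ ≤ A → b ≤ A →
      ∀ (μf ψ : ℝ → ℝ) (l : ℝ → ℝ → ℝ),
        Measurable μf → (∀ a ∈ Ico 0 A, 0 ≤ μf a) →
        (∀ a ∈ Ico 0 A, IntegrableOn μf (Icc 0 a)) → Measurable ψ →
        Measurable (fun p : ℝ × ℝ => l p.1 p.2) →
        (∀ᵐ p ∂(volume.restrict (Ioo 0 (min b b₂) ×ˢ Ioo 0 T)),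
          l p.1 p.2 = Real.exp (∫ r in (0:ℝ)..p.1, μf r) * ψ (p.2 - p.1)) →
        (∀ a ∈ Ioo 0 (min b b₂),
          l a 0 = Real.exp (∫ r in (0:ℝ)..a, μf r) * ψ (-a)) →
        (∫⁻ a in Ioo 0 a₀, ENNReal.ofReal ((l a 0) ^ 2)) ≤
          ENNReal.ofReal C *
            ∫⁻ t in Ioo 0 T, ∫⁻ a in Ioo b₁ b₂, ENNReal.ofReal ((l a t) ^ 2) :=
  stmt6_general b₁ b₂ b a₀ T hb₁ ha₀ ha₀ν hTb₁
end
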